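/- arXiv:1101.3494 — 6 statements merged into one kernel-verified Lean document; each statement's English description precedes it below -/
import Mathlib

section
/- A simple graph G is perfectly colorable if and only if G is perfect and paw-free. -/
/-!
A perfect coloring gives the two ends of every induced path `x - c - d` the same color, since
`{x, c, d}` is connected with clique number 2; applied to the paths `a - c - d` and `b - c - d`
of a paw it would give the edge `ab` a single color. On each connected component of an induced
subgraph it uses at most `ω` colors, so the graph is perfect.

Conversely, in a paw-free graph a vertex adjacent to a triangle is adjacent to two of its
vertices. Propagating this along walks shows that a component containing a triangle is complete
multipartite, and there coloring each vertex by its non-neighbourhood is perfect: every set of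
colors is realized by a clique. The other components are triangle-free, hence 2-colorable by
perfection, and a 2-coloring is perfect because a connected set with two vertices has an edge.
-/

/-- The paw graph: vertices `a = 0`, `b = 1`, `c = 2`, `d = 3`,
with edge set `{ab, ac, bc, cd}`. -/
def pawGraph : SimpleGraph (Fin 4) :=
  SimpleGraph.fromEdgeSet {s(0, 1), s(0, 2), s(1, 2), s(2, 3)}

/-- A graph is paw-free if no induced subgraph is isomorphic to the paw. -/
def SimpleGraph.PawFree {V : Type*} (G : SimpleGraph V) : Prop :=
  ¬ ∃ S : Set V, Nonempty (G.induce S ≃g pawGraph)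

/-- A graph is perfect if every induced subgraph has chromatic number
equal to its clique number. -/
def SimpleGraph.IsPerfect {V : Type*} (G : SimpleGraph V) : Prop :=
  ∀ S : Set V, (G.induce S).chromaticNumber = ((G.induce S).cliqueNum : ℕ∞)

/-- A proper coloring is a perfect coloring if every vertex set `S` inducing a
connected subgraph sees exactly `ω(G[S])` distinct colors. -/
def SimpleGraph.IsPerfectColoring {V α : Type*} (G : SimpleGraph V) (C : G.Coloring α) :
    Prop :=
  ∀ S : Set V, (G.induce S).Connected → (⇑C '' S).ncard = (G.induce S).cliqueNum

/-- A graph is perfectly colorable if it admits a perfect coloring. -/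
def SimpleGraph.PerfectlyColorable {V : Type*} (G : SimpleGraph V) : Prop :=
  ∃ (α : Type) (C : G.Coloring α), G.IsPerfectColoring C

/-- A graph is complete multipartite iff non-adjacency is transitive. -/
def SimpleGraph.IsCompleteMultipartiteOld {V : Type*} (G : SimpleGraph V) : Prop :=
  Transitive fun v w => ¬ G.Adj v w

namespace SimpleGraph

open Set

variable {V W α β : Type*} {G : SimpleGraph V} {H : SimpleGraph W}

theorem IsClique.ncard_le_cliqueNum [Finite V] {K : Set V} (hK : G.IsClique K) :
    K.ncard ≤ G.cliqueNum := by
  have hfin := K.toFinite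
  rw [← hfin.coe_toFinset] at hK
  rw [ncard_eq_toFinset_card K hfin]
  exact hK.card_le_cliqueNum

theorem IsClique.ncard_le_cliqueNum_induce [Finite V] {K S : Set V} (hK : G.IsClique K)
    (hKS : K ⊆ S) : K.ncard ≤ (G.induce S).cliqueNum := by
  have hK' : (G.induce S).IsClique (Subtype.val ⁻¹' K) := by
    rwa [isClique_induce_iff, Subtype.image_preimage_coe, inter_eq_right.mpr hKS]
  rw [← ncard_preimage_of_injective_subset_range (f := ((↑) : S → V)) Subtype.val_injective
    (by rwa [Subtype.range_coe])]
  exact hK'.ncard_le_cliqueNum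

theorem exists_isClique_ncard_eq_cliqueNum_induce (S : Set V) :
    ∃ K ⊆ S, G.IsClique K ∧ K.ncard = (G.induce S).cliqueNum := by
  obtain ⟨s, hs⟩ := (G.induce S).exists_isNClique_cliqueNum
  refine ⟨Subtype.val '' (s : Set S), Subtype.coe_image_subset _ _,
    isClique_induce_iff.mp hs.isClique, ?_⟩
  rw [ncard_image_of_injective _ Subtype.val_injective, ncard_coe_finset, hs.card_eq]

theorem Embedding.cliqueNum_le [Finite V] (f : H ↪g G) : H.cliqueNum ≤ G.cliqueNum := by
  obtain ⟨s, hs⟩ := H.exists_isNClique_cliqueNum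
  have hmap : G.IsNClique H.cliqueNum (s.map f.toEmbedding) :=
    hs.map.mono ((map_le_iff_le_comap _ _ _).mpr f.comap_eq.ge)
  exact hmap.card_eq ▸ hmap.isClique.card_le_cliqueNum

theorem Iso.cliqueNum_eq [Finite V] [Finite W] (e : H ≃g G) : H.cliqueNum = G.cliqueNum :=
  e.toEmbedding.cliqueNum_le.antisymm e.symm.toEmbedding.cliqueNum_le

theorem Coloring.colorable_ncard_range [Finite V] (C : G.Coloring α) :
    G.Colorable (range C).ncard := by
  have : Fintype (range C) := Fintype.ofFinite _
  rw [← Nat.card_coe_set_eq, Nat.card_eq_fintype_card]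
  exact Coloring.colorable
    ⟨rangeFactorization C, fun h heq => C.valid h (congrArg Subtype.val heq)⟩

theorem Coloring.cliqueNum_le_ncard_range [Finite V] (C : G.Coloring α) :
    G.cliqueNum ≤ (range C).ncard := by
  obtain ⟨s, hs⟩ := G.exists_isNClique_cliqueNum
  exact hs.card_eq ▸ hs.isClique.card_le_of_colorable C.colorable_ncard_range

theorem IsPerfectColoring.recolorOfEmbedding {C : G.Coloring α} (hC : G.IsPerfectColoring C)
    (f : α ↪ β) : G.IsPerfectColoring (G.recolorOfEmbedding f C) := by
  intro S hS
  rw [coe_recolorOfEmbedding, Hom.coe_comp, image_comp]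
  exact (ncard_image_of_injective _ f.injective).trans (hC S hS)

theorem IsPerfectColoring.perfectlyColorable [Finite α] {C : G.Coloring α}
    (hC : G.IsPerfectColoring C) : G.PerfectlyColorable :=
  ⟨_, _, hC.recolorOfEmbedding (Finite.equivFin α).toEmbedding⟩

theorem IsPerfectColoring.comap [Finite V] {C : G.Coloring α} (hC : G.IsPerfectColoring C)
    (f : H ↪g G) : H.IsPerfectColoring (C.comp f.toHom) := by
  have : Finite W := Finite.of_injective f f.injective
  intro T hT
  let g : H.induce T ↪g G := f.comp (Embedding.induce T)
  have hrange : (C.comp f.toHom) '' T = C '' range g := by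
    rw [← range_comp, image_eq_range]; rfl
  rw [hrange, hC _ (g.isoInduceRange.connected_iff.mp hT), g.isoInduceRange.cliqueNum_eq]

theorem IsPerfectColoring.ncard_range_eq_cliqueNum [Finite V] {C : G.Coloring α}
    (hC : G.IsPerfectColoring C) (hG : G.Connected) : (range C).ncard = G.cliqueNum := by
  rw [← image_univ, hC univ (G.induceUnivIso.connected_iff.mpr hG), G.induceUnivIso.cliqueNum_eq]

theorem IsPerfectColoring.colorable_cliqueNum [Finite V] {C : G.Coloring α}
    (hC : G.IsPerfectColoring C) : G.Colorable G.cliqueNum := by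
  refine colorable_iff_forall_connectedComponent.mpr fun c => ?_
  have hc := hC.comap (Embedding.induce c.supp)
  refine (Coloring.colorable_ncard_range (C.comp (Embedding.induce c.supp).toHom)).mono ?_
  rw [hc.ncard_range_eq_cliqueNum c.connected_toSimpleGraph]
  exact cliqueNum_induce_le _

theorem IsPerfectColoring.isPerfect [Finite V] {C : G.Coloring α} (hC : G.IsPerfectColoring C) :
    G.IsPerfect := fun S =>
  ((hC.comap (Embedding.induce S)).colorable_cliqueNum.chromaticNumber_le).antisymm
    cliqueNum_le_chromaticNumber

theorem isPerfectColoring_of_forall_exists_isClique [Finite V] {C : G.Coloring α}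
    (h : ∀ S, (G.induce S).Connected → ∃ K ⊆ S, G.IsClique K ∧ C '' K = C '' S) :
    G.IsPerfectColoring C := by
  intro S hS
  obtain ⟨K, hKS, hK, hCK⟩ := h S hS
  apply le_antisymm
  · calc (C '' S).ncard = (C '' K).ncard := by rw [hCK]
      _ ≤ K.ncard := ncard_image_le
      _ ≤ _ := hK.ncard_le_cliqueNum_induce hKS
  · calc (G.induce S).cliqueNum ≤ (range (C.comp (Embedding.induce S).toHom)).ncard :=
          Coloring.cliqueNum_le_ncard_range _
      _ = (C '' S).ncard := by
        rw [Hom.coe_comp, range_comp]; exact congrArg (ncard ∘ image C) Subtype.range_coe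

theorem exists_isClique_image_eq_of_forall_not_adj {f : V → α} {S : Set V}
    (h : ∀ x ∈ S, ∀ y ∈ S, ¬ G.Adj x y → f x = f y) :
    ∃ K ⊆ S, G.IsClique K ∧ f '' K = f '' S := by
  obtain ⟨K, hKS, hbij⟩ := exists_subset_bijOn S f
  refine ⟨K, hKS, fun x hx y hy hxy => ?_, hbij.image_eq⟩
  by_contra hn
  exact hxy (hbij.injOn hx hy (h x (hKS hx) y (hKS hy) hn))

theorem Coloring.exists_isClique_image_eq_of_ncard_le_two [Finite V] (C : G.Coloring α)
    {S : Set V} (hS : (G.induce S).Connected) (h2 : (C '' S).ncard ≤ 2) :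
    ∃ K ⊆ S, G.IsClique K ∧ C '' K = C '' S := by
  rcases S.subsingleton_or_nontrivial with hs | hs
  · exact ⟨S, subset_rfl, IsClique.of_subsingleton hs, rfl⟩
  have : Nontrivial S := hs.coe_sort
  obtain ⟨⟨x, hx⟩⟩ := hS.nonempty
  obtain ⟨⟨y, hy⟩, hxy⟩ := hS.preconnected.exists_adj_of_nontrivial ⟨x, hx⟩
  replace hxy : G.Adj x y := hxy
  refine ⟨{x, y}, pair_subset hx hy, isClique_pair.mpr fun _ => hxy, ?_⟩
  refine eq_of_subset_of_ncard_le (image_mono (pair_subset hx hy)) ?_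
  rwa [image_pair, ncard_pair (C.valid hxy)]

theorem pawFree_iff : G.PawFree ↔ ∀ ⦃a b c d : V⦄, G.Adj a b → G.Adj a c → G.Adj b c →
    G.Adj c d → G.Adj a d ∨ G.Adj b d := by
  constructor
  · intro hG a b c d hab hac hbc hcd
    by_contra! hpaw
    obtain ⟨had, hbd⟩ := hpaw
    have hda : d ≠ a := fun h => hbd (h ▸ hab.symm)
    have hdb : d ≠ b := fun h => had (h ▸ hab)
    have hf : ∀ i j, G.Adj (![a, b, c, d] i) (![a, b, c, d] j) ↔ pawGraph.Adj i j := by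
      intro i j
      fin_cases i <;> fin_cases j <;> simp [pawGraph, adj_comm, hab, hac, hbc, hcd, had, hbd]
    have hinj : Function.Injective ![a, b, c, d] := by
      intro i j hij
      fin_cases i <;> fin_cases j <;> simp_all [hab.ne, hac.ne, hbc.ne, hcd.ne, eq_comm]
    let f : pawGraph ↪g G := ⟨⟨_, hinj⟩, hf _ _⟩
    exact hG ⟨_, ⟨f.isoInduceRange.symm⟩⟩
  · rintro h ⟨S, ⟨e⟩⟩
    let f : pawGraph ↪g G := (Embedding.induce S).comp e.symm.toEmbedding
    have hf : ∀ i j, G.Adj (f i) (f j) ↔ pawGraph.Adj i j := fun _ _ => f.map_adj_iff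
    have := h ((hf 0 1).mpr ?_) ((hf 0 2).mpr ?_) ((hf 1 2).mpr ?_) ((hf 2 3).mpr ?_)
    · rw [hf, hf] at this
      simp [pawGraph] at this
    all_goals simp [pawGraph]

theorem IsPerfectColoring.apply_eq_of_adj_of_adj_of_not_adj [Finite V] {C : G.Coloring α}
    (hC : G.IsPerfectColoring C) {x c d : V} (hxc : G.Adj x c) (hcd : G.Adj c d)
    (hxd : ¬ G.Adj x d) : C x = C d := by
  by_contra hne
  have hconn : (G.induce {x, c, d}).Connected := by
    have hS : ({x, c, d} : Set V) =
        {v | v ∈ (Walk.cons hxc (Walk.cons hcd Walk.nil)).support} := by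
      ext; simp
    exact hS ▸ Walk.connected_induce_support _
  have hcolors : (C '' {x, c, d}).ncard = 3 := by
    rw [image_insert_eq, image_pair, ncard_insert_of_notMem (by simp [C.valid hxc, hne]),
      ncard_pair (C.valid hcd)]
  obtain ⟨K, hKS, hK, hKcard⟩ := exists_isClique_ncard_eq_cliqueNum_induce (G := G) {x, c, d}
  have hK3 : K = {x, c, d} := eq_of_subset_of_ncard_le hKS (by
    rw [hKcard, ← hC _ hconn, hcolors]
    exact (ncard_insert_le _ _).trans (by rw [ncard_pair hcd.ne]))
  exact hxd (hK (by simp [hK3]) (by simp [hK3]) (fun h => hne (h ▸ rfl)))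

theorem IsPerfectColoring.pawFree [Finite V] {C : G.Coloring α} (hC : G.IsPerfectColoring C) :
    G.PawFree := by
  refine pawFree_iff.mpr fun a b c d hab hac hbc hcd => ?_
  by_contra! h
  exact C.valid hab ((hC.apply_eq_of_adj_of_adj_of_not_adj hac hcd h.1).trans
    (hC.apply_eq_of_adj_of_adj_of_not_adj hbc hcd h.2).symm)

def InTriangle (G : SimpleGraph V) (v : V) : Prop :=
  ∃ a b, G.Adj v a ∧ G.Adj v b ∧ G.Adj a b

theorem PawFree.exists_adj_adj_of_adj (hG : G.PawFree) {x z : V} (hx : G.InTriangle x)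
    (hxz : G.Adj x z) : ∃ r, G.Adj x r ∧ G.Adj z r := by
  obtain ⟨a, b, hxa, hxb, hab⟩ := hx
  rcases pawFree_iff.mp hG hab hxa.symm hxb.symm hxz with h | h
  exacts [⟨a, hxa, h.symm⟩, ⟨b, hxb, h.symm⟩]

theorem PawFree.inTriangle_of_reachable (hG : G.PawFree) {x z : V} (hxz : G.Reachable x z)
    (hx : G.InTriangle x) : G.InTriangle z := by
  obtain h := (reachable_iff_reflTransGen x z).mp hxz
  clear hxz
  induction h with
  | refl => exact hx
  | tail _ hyz ih =>
    obtain ⟨r, hyr, hzr⟩ := hG.exists_adj_adj_of_adj ih hyz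
    exact ⟨_, r, hyz.symm, hzr, hyr⟩

theorem PawFree.adj_or_adj_of_reachable (hG : G.PawFree) {a b c y : V} (hab : G.Adj a b)
    (hac : G.Adj a c) (hbc : G.Adj b c) (hay : G.Reachable a y) :
    (G.Adj a y ∨ G.Adj b y) ∧ (G.Adj a y ∨ G.Adj c y) ∧ (G.Adj b y ∨ G.Adj c y) := by
  have paw := pawFree_iff.mp hG
  obtain h := (reachable_iff_reflTransGen a y).mp hay
  clear hay
  induction h with
  | refl => exact ⟨.inr hab.symm, .inr hac.symm, .inl hab.symm⟩
  | @tail w y _ hwy ih =>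
    have step : ∀ {p q r : V}, G.Adj p q → G.Adj p r → G.Adj q r →
        G.Adj p w → G.Adj q w →
        (G.Adj p y ∨ G.Adj q y) ∧ (G.Adj p y ∨ G.Adj r y) ∧ (G.Adj q y ∨ G.Adj r y) := by
      intro p q r hpq hpr hqr hpw hqw
      rcases paw hpq hpw hqw hwy with hpy | hqy
      · rcases paw hqr hpq.symm hpr.symm hpy with h | h <;> tauto
      · rcases paw hpr hpq hqr.symm hqy with h | h <;> tauto
    have two :
        (G.Adj a w ∧ G.Adj b w) ∨ (G.Adj a w ∧ G.Adj c w) ∨ (G.Adj b w ∧ G.Adj c w) := by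
      clear step paw; tauto
    rcases two with ⟨h₁, h₂⟩ | ⟨h₁, h₂⟩ | ⟨h₁, h₂⟩
    · exact step hab hac hbc h₁ h₂
    · obtain ⟨h₁, h₂, h₃⟩ := step hac hab hbc.symm h₁ h₂
      exact ⟨h₂, h₁, h₃.symm⟩
    · obtain ⟨h₁, h₂, h₃⟩ := step hbc hab.symm hac.symm h₁ h₂
      exact ⟨h₂.symm, h₃.symm, h₁⟩

theorem PawFree.not_adj_trans (hG : G.PawFree) {u w x : V} (hu : G.InTriangle u)
    (huw : G.Reachable u w) (h₁ : ¬ G.Adj u w) (h₂ : ¬ G.Adj w x) : ¬ G.Adj u x := by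
  intro hux
  obtain ⟨r, hur, hxr⟩ := hG.exists_adj_adj_of_adj hu hux
  rcases (hG.adj_or_adj_of_reachable hux hur hxr huw).1 with h | h
  exacts [h₁ h, h₂ h.symm]

theorem IsPerfect.colorable_induce_cliqueNum (hP : G.IsPerfect) (S : Set V) :
    (G.induce S).Colorable (G.induce S).cliqueNum :=
  chromaticNumber_le_iff_colorable.mp (hP S).le

theorem cliqueNum_induce_not_inTriangle_le_two :
    (G.induce {v | ¬ G.InTriangle v}).cliqueNum ≤ 2 := by
  obtain ⟨s, hs⟩ := (G.induce {v | ¬ G.InTriangle v}).exists_isNClique_cliqueNum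
  by_contra! h3
  obtain ⟨x, hx, y, hy, z, hz, hxy, hxz, hyz⟩ := Finset.two_lt_card.mp (hs.card_eq ▸ h3)
  exact x.2 ⟨y, z, hs.isClique hx hy hxy, hs.isClique hx hz hxz, hs.isClique hy hz hyz⟩

theorem IsPerfect.colorable_induce_not_inTriangle (hP : G.IsPerfect) :
    (G.induce {v | ¬ G.InTriangle v}).Colorable 2 :=
  (hP.colorable_induce_cliqueNum _).mono cliqueNum_induce_not_inTriangle_le_two

namespace PawFree

variable (hG : G.PawFree) (b : (G.induce {v | ¬ G.InTriangle v}).Coloring (Fin 2))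

open Classical in
noncomputable def coloring : G.Coloring (Set V ⊕ Fin 2) :=
  Coloring.mk (fun v => if h : G.InTriangle v then .inl {w | ¬ G.Adj v w} else .inr (b ⟨v, h⟩))
    (by
      intro u v huv
      by_cases hu : G.InTriangle u
      · have hv := hG.inTriangle_of_reachable huv.reachable hu
        rw [dif_pos hu, dif_pos hv]
        intro h
        have hvv : v ∈ {w | ¬ G.Adj v w} := G.loopless.irrefl v
        rw [← Sum.inl_injective h] at hvv
        exact hvv huv
      · have hv : ¬ G.InTriangle v := fun hv =>
          hu (hG.inTriangle_of_reachable huv.symm.reachable hv)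
        rw [dif_neg hu, dif_neg hv]
        exact fun h => b.valid (show (G.induce _).Adj ⟨u, hu⟩ ⟨v, hv⟩ from huv)
          (Sum.inr_injective h))

theorem coloring_apply_of_inTriangle {v : V} (hv : G.InTriangle v) :
    hG.coloring b v = .inl {w | ¬ G.Adj v w} :=
  dif_pos hv

theorem coloring_apply_of_not_inTriangle {v : V} (hv : ¬ G.InTriangle v) :
    hG.coloring b v = .inr (b ⟨v, hv⟩) :=
  dif_neg hv

theorem isPerfectColoring_coloring [Finite V] : G.IsPerfectColoring (hG.coloring b) := by
  refine isPerfectColoring_of_forall_exists_isClique fun S hS => ?_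
  obtain ⟨⟨s, hs⟩⟩ := hS.nonempty
  have hreach : ∀ x ∈ S, ∀ y ∈ S, G.Reachable x y := fun x hx y hy =>
    (hS.preconnected ⟨x, hx⟩ ⟨y, hy⟩).map (Embedding.induce S).toHom
  by_cases hT : G.InTriangle s
  · refine exists_isClique_image_eq_of_forall_not_adj fun x hx y hy hxy => ?_
    have hxT := hG.inTriangle_of_reachable (hreach s hs x hx) hT
    have hyT := hG.inTriangle_of_reachable (hreach s hs y hy) hT
    rw [coloring_apply_of_inTriangle hG b hxT, coloring_apply_of_inTriangle hG b hyT]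
    congr 1
    ext z
    exact ⟨hG.not_adj_trans hyT (hreach y hy x hx) (fun h => hxy h.symm),
      hG.not_adj_trans hxT (hreach x hx y hy) hxy⟩
  · refine (hG.coloring b).exists_isClique_image_eq_of_ncard_le_two hS ?_
    calc (hG.coloring b '' S).ncard ≤ (range (Sum.inr : Fin 2 → Set V ⊕ Fin 2)).ncard := by
          refine ncard_le_ncard ?_
          rintro _ ⟨x, hx, rfl⟩
          have hxT : ¬ G.InTriangle x := fun h =>
            hT (hG.inTriangle_of_reachable (hreach x hx s hs) h)
          exact ⟨_, (coloring_apply_of_not_inTriangle hG b hxT).symm⟩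
      _ = 2 := by rw [ncard_range_of_injective Sum.inr_injective, Nat.card_fin]

end PawFree

end SimpleGraph

/-- A simple graph is perfectly colorable iff it is perfect and paw-free. -/
theorem perfectlyColorable_iff_isPerfect_and_pawFree {V : Type*} [Fintype V]
    (G : SimpleGraph V) :
    G.PerfectlyColorable ↔ G.IsPerfect ∧ G.PawFree := by
  constructor
  · rintro ⟨α, C, hC⟩
    exact ⟨hC.isPerfect, hC.pawFree⟩
  · rintro ⟨hP, hG⟩
    obtain ⟨b⟩ := hP.colorable_induce_not_inTriangle
    exact (hG.isPerfectColoring_coloring b).perfectlyColorable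
end

section
/- If a simple graph G is perfectly colorable, then G is paw-free. -/
/-- A graph is complete multipartite iff non-adjacency is transitive. -/
def SimpleGraph.IsCompleteMultipartite' {V : Type*} (G : SimpleGraph V) : Prop :=
  Transitive fun v w => ¬ G.Adj v w

/-!
In a perfect coloring the two ends of an induced path `u - v - w` get the same color: the
path is connected with clique number 2, so it sees only two colors, and `v` differs from both
ends. In a paw with triangle `abc` and pendant edge `cd`, both `a - c - d` and `b - c - d` are
induced paths, so `a` and `b` both get the color of `d`, although `a` and `b` are adjacent.
-/

namespace SimpleGraph

variable {V : Type*} {G : SimpleGraph V}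

lemma cliqueNum_induce_lt_ncard {S : Set V} (hS : S.Finite) {u w : V} (hu : u ∈ S) (hw : w ∈ S)
    (huw : u ≠ w) (hadj : ¬ G.Adj u w) : (G.induce S).cliqueNum < S.ncard := by
  have := hS.fintype
  obtain ⟨t, ht⟩ := (G.induce S).exists_isNClique_cliqueNum
  have hmiss : ⟨u, hu⟩ ∉ t ∨ ⟨w, hw⟩ ∉ t := by
    by_contra! h
    exact hadj (ht.isClique h.1 h.2 (by simpa using huw))
  rw [← ht.card_eq, ← Nat.card_coe_set_eq, Nat.card_eq_fintype_card]
  rcases hmiss with h | h <;> exact Finset.card_lt_univ_of_notMem h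

lemma induce_connected_of_adj_of_adj {u v w : V} (huv : G.Adj u v) (hvw : G.Adj v w) :
    (G.induce {u, v, w}).Connected := by
  let p : G.Walk u w := .cons huv (.cons hvw .nil)
  rw [show ({u, v, w} : Set V) = {x | x ∈ p.support} by ext; simp [p]]
  exact p.connected_induce_support

variable {α : Type*} {C : G.Coloring α}

lemma IsPerfectColoring.not_injOn (hC : G.IsPerfectColoring C) {S : Set V} (hS : S.Finite)
    (hconn : (G.induce S).Connected) {u w : V} (hu : u ∈ S) (hw : w ∈ S) (huw : u ≠ w)
    (hadj : ¬ G.Adj u w) : ¬ S.InjOn C := by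
  intro hinj
  have hlt := cliqueNum_induce_lt_ncard hS hu hw huw hadj
  rw [← hC S hconn, hinj.ncard_image] at hlt
  exact lt_irrefl _ hlt

lemma IsPerfectColoring.eq_of_adj_of_adj_of_not_adj (hC : G.IsPerfectColoring C) {u v w : V}
    (huv : G.Adj u v) (hvw : G.Adj v w) (huw : ¬ G.Adj u w) : C u = C w := by
  by_contra hne
  have huw' : u ≠ w := ne_of_apply_ne C hne
  refine hC.not_injOn (Set.toFinite _) (induce_connected_of_adj_of_adj huv hvw) (by simp)
    (by simp) huw' huw ?_
  rw [Set.injOn_insert (by simp [huv.ne, huw']), Set.injOn_pair]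
  simp [C.valid hvw, (C.valid huv).symm, Ne.symm hne]

end SimpleGraph

theorem pawFree_of_perfectlyColorable_general {V : Type*}
    (G : SimpleGraph V) (h : G.PerfectlyColorable) :
    G.PawFree := by
  obtain ⟨α, C, hC⟩ := h
  rintro ⟨S, ⟨e⟩⟩
  have hadj (i j : Fin 4) : G.Adj (e.symm i) (e.symm j) ↔ pawGraph.Adj i j := e.symm.map_adj_iff
  have h03 := hC.eq_of_adj_of_adj_of_not_adj ((hadj 0 2).2 (by simp [pawGraph]))
    ((hadj 2 3).2 (by simp [pawGraph])) ((hadj 0 3).not.2 (by simp [pawGraph]))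
  have h13 := hC.eq_of_adj_of_adj_of_not_adj ((hadj 1 2).2 (by simp [pawGraph]))
    ((hadj 2 3).2 (by simp [pawGraph])) ((hadj 1 3).not.2 (by simp [pawGraph]))
  exact C.valid ((hadj 0 1).2 (by simp [pawGraph])) (h03.trans h13.symm)

/-- If a simple graph is perfectly colorable, then it is paw-free. -/
theorem pawFree_of_perfectlyColorable {V : Type*} [Fintype V]
    (G : SimpleGraph V) (h : G.PerfectlyColorable) :
    G.PawFree :=
  pawFree_of_perfectlyColorable_general G h
end

section
/- If a simple graph G contains an induced subgraph isomorphic to the paw, then G is not perfectly colorable. -/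
/-! In a perfect coloring the two ends of an induced path `x - y - z` get the same color: the
path is connected with clique number `2`, so it sees only two colors, while `y` differs from
both ends. In the paw `a, b, c, d` both `a - c - d` and `b - c - d` are induced paths, so `a` and
`b` get the color of `d`, although they are adjacent. -/

namespace SimpleGraph

variable {V : Type*} {G : SimpleGraph V} {x y z : V}

theorem cliqueNum_lt_of_cliqueFree {n : ℕ} (h : G.CliqueFree n) : G.cliqueNum < n := by
  obtain ⟨s, hs⟩ := G.exists_isNClique_cliqueNum
  by_contra! hn
  exact h.mono hn s hs

theorem induce_triple_connected_of_adj (hxy : G.Adj x y) (hyz : G.Adj y z) :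
    (G.induce {x, y, z}).Connected := by
  have hunion : ({x, y} ∪ {y, z} : Set V) = {x, y, z} := by
    ext; simp only [Set.mem_union, Set.mem_insert_iff, Set.mem_singleton_iff]; tauto
  rw [← hunion]
  exact induce_union_connected (induce_pair_connected_of_adj hxy).preconnected
    (induce_pair_connected_of_adj hyz).preconnected ⟨y, by simp⟩

theorem cliqueFree_three_induce_triple_of_not_adj (hxz : ¬G.Adj x z) :
    (G.induce {x, y, z}).CliqueFree 3 := by
  classical
  rintro t ht
  obtain ⟨⟨a, ha⟩, ⟨b, hb⟩, ⟨c, hc⟩, hab, hac, hbc, -⟩ := is3Clique_iff.1 ht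
  rcases ha with rfl | rfl | rfl <;> rcases hb with rfl | rfl | rfl <;>
    rcases hc with rfl | rfl | rfl <;> simp_all [adj_comm]

theorem IsPerfectColoring.eq_of_induced_path {α : Type*} {C : G.Coloring α}
    (hC : G.IsPerfectColoring C) (hxy : G.Adj x y) (hyz : G.Adj y z) (hxz : ¬G.Adj x z) :
    C x = C z := by
  have hcolors : (C '' {x, y, z}).ncard < 3 := by
    rw [hC _ (induce_triple_connected_of_adj hxy hyz)]
    exact cliqueNum_lt_of_cliqueFree (cliqueFree_three_induce_triple_of_not_adj hxz)
  by_contra hne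
  have hthree : (C '' {x, y, z}).ncard = 3 := by
    rw [Set.image_insert_eq, Set.image_insert_eq, Set.image_singleton,
      Set.ncard_insert_of_notMem (by simp [C.valid hxy, hne]),
      Set.ncard_pair (C.valid hyz)]
  omega

theorem not_perfectlyColorable_of_pawGraph_embedding (φ : pawGraph ↪g G) :
    ¬G.PerfectlyColorable := by
  rintro ⟨α, C, hC⟩
  have adj {u v : Fin 4} : G.Adj (φ u) (φ v) ↔ pawGraph.Adj u v := φ.map_adj_iff
  have had : C (φ 0) = C (φ 3) :=
    hC.eq_of_induced_path (y := φ 2) (adj.2 (by simp [pawGraph])) (adj.2 (by simp [pawGraph]))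
      (mt adj.1 (by simp [pawGraph]))
  have hbd : C (φ 1) = C (φ 3) :=
    hC.eq_of_induced_path (y := φ 2) (adj.2 (by simp [pawGraph])) (adj.2 (by simp [pawGraph]))
      (mt adj.1 (by simp [pawGraph]))
  exact C.valid (adj.2 (by simp [pawGraph])) (had.trans hbd.symm)

end SimpleGraph

theorem not_perfectlyColorable_of_induced_paw_general {V : Type*}
    (G : SimpleGraph V) (S : Set V) (h : Nonempty (G.induce S ≃g pawGraph)) :
    ¬ G.PerfectlyColorable := by
  obtain ⟨e⟩ := h
  exact SimpleGraph.not_perfectlyColorable_of_pawGraph_embedding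
    ((SimpleGraph.Embedding.induce S).comp e.symm.toEmbedding)

/-- A graph with an induced paw is not perfectly colorable. -/
theorem not_perfectlyColorable_of_induced_paw {V : Type*} [Fintype V]
    (G : SimpleGraph V) (S : Set V) (h : Nonempty (G.induce S ≃g pawGraph)) :
    ¬ G.PerfectlyColorable :=
  not_perfectlyColorable_of_induced_paw_general G S h
end

section
/- If every connected component of a simple graph G is bipartite or complete multipartite, then G is perfect and paw-free. -/
/-!
Being bipartite or complete multipartite is inherited by subgraphs along embeddings, and a
connected graph embedded in `G` lands in a single component of `G`. Hence every induced subgraph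
of `G` again has only bipartite or complete multipartite components. Such a component can be
colored with `ω` colors (a complete multipartite graph by its parts, a bipartite graph with two
colors unless it is edgeless), and colorings of the components glue. The paw is connected,
contains a triangle, and its pendant vertex `d` is non-adjacent to `a` and `b` although `ab` is an
edge, so it is neither bipartite nor complete multipartite.
-/

namespace SimpleGraph

variable {V W : Type*} {G : SimpleGraph V} {H : SimpleGraph W}

theorem isCompleteMultipartite'_iff : G.IsCompleteMultipartite' ↔ G.IsCompleteMultipartite :=
  ⟨fun h ↦ ⟨fun _ _ _ ↦ @h _ _ _⟩, fun h _ _ _ ↦ h.trans _ _ _⟩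

theorem cliqueFree_of_cliqueNum_lt [Finite V] {n : ℕ} (h : G.cliqueNum < n) : G.CliqueFree n :=
  fun _ ht ↦ (ht.card_eq ▸ ht.isClique.card_le_cliqueNum).not_gt h

theorem IsCompleteMultipartite.colorable_cliqueNum [Finite V] (h : G.IsCompleteMultipartite) :
    G.Colorable G.cliqueNum := by
  simpa using h.colorable_of_cliqueFree (cliqueFree_of_cliqueNum_lt (Nat.lt_succ_self _))

theorem Colorable.colorable_cliqueNum_of_two [Finite V] (h : G.Colorable 2) :
    G.Colorable G.cliqueNum := by
  rcases le_or_gt 2 G.cliqueNum with h2 | h2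
  · exact h.mono h2
  · obtain rfl : G = ⊥ := cliqueFree_two.mp (cliqueFree_of_cliqueNum_lt h2)
    exact bot_isCompleteMultipartite.colorable_cliqueNum

def IsBipartiteOrCompleteMultipartite (G : SimpleGraph V) : Prop :=
  G.Colorable 2 ∨ G.IsCompleteMultipartite

theorem IsBipartiteOrCompleteMultipartite.comap (f : H ↪g G)
    (h : G.IsBipartiteOrCompleteMultipartite) : H.IsBipartiteOrCompleteMultipartite :=
  h.imp (·.of_hom f.toHom) (·.comap f)

theorem IsBipartiteOrCompleteMultipartite.colorable_cliqueNum [Finite V]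
    (h : G.IsBipartiteOrCompleteMultipartite) : G.Colorable G.cliqueNum :=
  h.elim Colorable.colorable_cliqueNum_of_two IsCompleteMultipartite.colorable_cliqueNum

theorem pawGraph_connected : pawGraph.Connected := by
  have h (i : Fin 4) : pawGraph.Reachable i 2 := by
    fin_cases i
    all_goals first | rfl | exact Adj.reachable (by simp [pawGraph])
  exact ⟨fun i j ↦ (h i).trans (h j).symm⟩

theorem not_isBipartiteOrCompleteMultipartite_pawGraph :
    ¬ pawGraph.IsBipartiteOrCompleteMultipartite := by
  rintro (hbip | hcm)
  · exact hbip.cliqueFree (by norm_num) {0, 1, 2} (is3Clique_triple_iff.mpr (by simp [pawGraph]))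
  · exact hcm.trans 0 3 1 (by simp [pawGraph]) (by simp [pawGraph]) (by simp [pawGraph])

theorem Connected.exists_embedding_toSimpleGraph (hH : H.Connected) (f : H ↪g G) :
    ∃ c : G.ConnectedComponent, Nonempty (H ↪g c.toSimpleGraph) := by
  obtain ⟨w₀⟩ := hH.nonempty
  have hmem (w : W) : f w ∈ (G.connectedComponentMk (f w₀)).supp :=
    ConnectedComponent.sound ((hH w w₀).map f.toHom)
  exact ⟨_, ⟨RelEmbedding.codRestrict _ f hmem⟩⟩

def ComponentwiseBipartiteOrCompleteMultipartite (G : SimpleGraph V) : Prop :=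
  ∀ c : G.ConnectedComponent, c.toSimpleGraph.IsBipartiteOrCompleteMultipartite

namespace ComponentwiseBipartiteOrCompleteMultipartite

theorem of_connected_embedding (hG : G.ComponentwiseBipartiteOrCompleteMultipartite)
    (hH : H.Connected) (f : H ↪g G) : H.IsBipartiteOrCompleteMultipartite := by
  obtain ⟨c, ⟨g⟩⟩ := hH.exists_embedding_toSimpleGraph f
  exact (hG c).comap g

theorem induce (hG : G.ComponentwiseBipartiteOrCompleteMultipartite) (S : Set V) :
    (G.induce S).ComponentwiseBipartiteOrCompleteMultipartite := fun c ↦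
  hG.of_connected_embedding c.connected_toSimpleGraph
    ((Embedding.induce S).comp (Embedding.induce c.supp))

theorem chromaticNumber_eq_cliqueNum [Finite V]
    (hG : G.ComponentwiseBipartiteOrCompleteMultipartite) :
    G.chromaticNumber = G.cliqueNum := by
  have hcol : G.Colorable G.cliqueNum := colorable_iff_forall_connectedComponent.mpr fun c ↦
    (hG c).colorable_cliqueNum.mono (G.cliqueNum_induce_le c.supp)
  exact le_antisymm hcol.chromaticNumber_le G.cliqueNum_le_chromaticNumber

theorem isPerfect [Finite V] (hG : G.ComponentwiseBipartiteOrCompleteMultipartite) :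
    G.IsPerfect := fun S ↦ (hG.induce S).chromaticNumber_eq_cliqueNum

theorem pawFree (hG : G.ComponentwiseBipartiteOrCompleteMultipartite) : G.PawFree :=
  fun ⟨S, ⟨e⟩⟩ ↦
  not_isBipartiteOrCompleteMultipartite_pawGraph <|
    hG.of_connected_embedding pawGraph_connected ((Embedding.induce S).comp e.symm.toEmbedding)

end ComponentwiseBipartiteOrCompleteMultipartite

end SimpleGraph

/-- If each connected component of a graph is bipartite or complete
multipartite, then the graph is perfect and paw-free. -/
theorem isPerfect_and_pawFree_of_components {V : Type*} [Fintype V]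
    (G : SimpleGraph V)
    (h : ∀ c : G.ConnectedComponent,
      (G.induce c.supp).Colorable 2 ∨ (G.induce c.supp).IsCompleteMultipartite') :
    G.IsPerfect ∧ G.PawFree := by
  have hG : G.ComponentwiseBipartiteOrCompleteMultipartite := fun c ↦
    (h c).imp_right SimpleGraph.isCompleteMultipartite'_iff.mp
  exact ⟨hG.isPerfect, hG.pawFree⟩
end

section
/- If a simple graph G is perfect and paw-free, then every connected component of G is bipartite or complete multipartite. -/
/-!
In a paw-free graph, a vertex adjacent to one vertex of a triangle is adjacent to a second one.
Hence in a connected paw-free graph containing a triangle every vertex lies in a triangle and is at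
distance at most one from every triangle. If `u ~ w` while `v` is adjacent to neither, extend `uw`
to a triangle `uwr`: then `v` is at distance two from it, since `v ≠ r` as `u ~ r`, and `v ~ r`
would force `v ~ u` or `v ~ w`. So non-adjacency is transitive in a component containing a
triangle, while a triangle-free component has clique number at most two and is bipartite by
perfection.
-/

namespace SimpleGraph

variable {V : Type*} {G : SimpleGraph V}

theorem pawFree_iff_not_isIndContained : G.PawFree ↔ ¬ pawGraph ⊴ G := by
  rw [PawFree, isIndContained_iff_exists_iso_induce]
  exact not_congr ⟨fun ⟨S, ⟨e⟩⟩ => ⟨S, ⟨e.symm⟩⟩, fun ⟨S, ⟨e⟩⟩ => ⟨S, ⟨e.symm⟩⟩⟩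

theorem PawFree.induce (hf : G.PawFree) (s : Set V) : (G.induce s).PawFree := by
  rw [pawFree_iff_not_isIndContained] at hf ⊢
  exact fun h => hf (h.trans ⟨Embedding.induce s⟩)

theorem pawGraph_isIndContained {a b c d : V} (hab : G.Adj a b) (hac : G.Adj a c)
    (hbc : G.Adj b c) (hcd : G.Adj c d) (had : ¬ G.Adj a d) (hbd : ¬ G.Adj b d) :
    pawGraph ⊴ G := by
  have had' : a ≠ d := by rintro rfl; exact hbd hab.symm
  have hbd' : b ≠ d := by rintro rfl; exact had hab
  refine ⟨⟨⟨![a, b, c, d], fun i j hij => ?_⟩, fun {i j} => ?_⟩⟩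
  · fin_cases i <;> fin_cases j <;>
      simp_all [hab.ne, hac.ne, hbc.ne, hcd.ne, hab.ne.symm, hac.ne.symm,
        hbc.ne.symm, hcd.ne.symm, had'.symm, hbd'.symm]
  · show G.Adj (![a, b, c, d] i) (![a, b, c, d] j) ↔ pawGraph.Adj i j
    fin_cases i <;> fin_cases j <;>
      simp [pawGraph, G.adj_comm d, hab, hac, hbc, hcd, hab.symm, hac.symm, hbc.symm, had, hbd]

theorem PawFree.adj_or_adj_of_triangle (hf : G.PawFree) {a b c v : V} (hab : G.Adj a b)
    (hac : G.Adj a c) (hbc : G.Adj b c) (hva : G.Adj v a) : G.Adj v b ∨ G.Adj v c := by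
  by_contra! h
  exact pawFree_iff_not_isIndContained.mp hf <| pawGraph_isIndContained hbc hab.symm hac.symm
    hva.symm (fun h' => h.1 h'.symm) (fun h' => h.2 h'.symm)

theorem PawFree.exists_triangle_of_adj (hf : G.PawFree) {x y : V} (hxy : G.Adj x y)
    (hx : ∃ p q, G.Adj x p ∧ G.Adj x q ∧ G.Adj p q) :
    ∃ p q, G.Adj y p ∧ G.Adj y q ∧ G.Adj p q := by
  obtain ⟨p, q, hxp, hxq, hpq⟩ := hx
  rcases hf.adj_or_adj_of_triangle hxp hxq hpq hxy.symm with hyp | hyq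
  · exact ⟨x, p, hxy.symm, hyp, hxp⟩
  · exact ⟨x, q, hxy.symm, hyq, hxq⟩

theorem PawFree.adj_triangle_of_adj_of_adj (hf : G.PawFree) {a b c s t : V} (hab : G.Adj a b)
    (hac : G.Adj a c) (hbc : G.Adj b c) (hsa : G.Adj s a) (hst : G.Adj s t) :
    G.Adj t a ∨ G.Adj t b ∨ G.Adj t c := by
  rcases hf.adj_or_adj_of_triangle hab hac hbc hsa with hsb | hsc
  · have := hf.adj_or_adj_of_triangle hsa hsb hab hst.symm
    tauto
  · have := hf.adj_or_adj_of_triangle hsa hsc hac hst.symm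
    tauto

theorem Reachable.induction_of_adj {P : V → Prop} (hP : ∀ ⦃x y⦄, G.Adj x y → P x → P y)
    {u v : V} (h : G.Reachable u v) (hu : P u) : P v := by
  obtain ⟨p⟩ := h
  induction p with
  | nil => exact hu
  | cons hxy _ ih => exact ih (hP hxy hu)

theorem PawFree.eq_or_adj_triangle_of_reachable (hf : G.PawFree) {a b c t : V}
    (hab : G.Adj a b) (hac : G.Adj a c) (hbc : G.Adj b c) (h : G.Reachable a t) :
    t = a ∨ t = b ∨ t = c ∨ G.Adj t a ∨ G.Adj t b ∨ G.Adj t c := by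
  refine h.induction_of_adj
    (P := fun t => t = a ∨ t = b ∨ t = c ∨ G.Adj t a ∨ G.Adj t b ∨ G.Adj t c) ?_ (.inl rfl)
  intro s t hst hs
  rcases hs with rfl | rfl | rfl | hsa | hsb | hsc
  iterate 3 simp [hst.symm]
  · have := hf.adj_triangle_of_adj_of_adj hab hac hbc hsa hst
    tauto
  · have := hf.adj_triangle_of_adj_of_adj hab.symm hbc hac hsb hst
    tauto
  · have := hf.adj_triangle_of_adj_of_adj hac.symm hbc.symm hab hsc hst
    tauto

theorem PawFree.isCompleteMultipartite'_of_connected (hf : G.PawFree) (hc : G.Connected)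
    (h3 : ¬ G.CliqueFree 3) : G.IsCompleteMultipartite' := by
  classical
  obtain ⟨s, hs⟩ : ∃ s, G.IsNClique 3 s := by simpa [CliqueFree] using h3
  obtain ⟨x, y, z, hxy, hxz, hyz, -⟩ := is3Clique_iff.mp hs
  intro u v w huv hvw huw
  obtain ⟨p, q, hup, huq, hpq⟩ := (hc.preconnected x u).induction_of_adj
    (fun _ _ h => hf.exists_triangle_of_adj h) ⟨y, z, hxy, hxz, hyz⟩
  obtain ⟨r, hur, hwr⟩ : ∃ r, G.Adj u r ∧ G.Adj w r := by
    rcases hf.adj_or_adj_of_triangle hup huq hpq huw.symm with hwp | hwq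
    · exact ⟨p, hup, hwp⟩
    · exact ⟨q, huq, hwq⟩
  rcases hf.eq_or_adj_triangle_of_reachable huw hur hwr (hc.preconnected u v)
    with rfl | rfl | rfl | hvu | hvw' | hvr
  · exact hvw huw
  · exact huv huw
  · exact huv hur
  · exact huv hvu.symm
  · exact hvw hvw'
  · rcases hf.adj_or_adj_of_triangle hur.symm hwr.symm huw hvr with hvu | hvw'
    · exact huv hvu.symm
    · exact hvw hvw'

theorem IsPerfect.colorable_induce_of_cliqueFree (hp : G.IsPerfect) {s : Set V} {n : ℕ}
    (h : (G.induce s).CliqueFree (n + 1)) : (G.induce s).Colorable n := by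
  obtain ⟨t, ht⟩ := (G.induce s).exists_isNClique_cliqueNum
  have hle : (G.induce s).cliqueNum ≤ n := by
    by_contra! hlt
    exact h.mono hlt t ht
  rw [← chromaticNumber_le_iff_colorable, hp s]
  exact_mod_cast hle

end SimpleGraph

theorem components_of_isPerfect_and_pawFree_general {V : Type*}
    (G : SimpleGraph V) (hp : G.IsPerfect) (hf : G.PawFree) :
    ∀ c : G.ConnectedComponent,
      (G.induce c.supp).Colorable 2 ∨ (G.induce c.supp).IsCompleteMultipartite' := by
  intro c
  by_cases h3 : (G.induce c.supp).CliqueFree 3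
  · exact .inl (hp.colorable_induce_of_cliqueFree h3)
  · exact .inr ((hf.induce c.supp).isCompleteMultipartite'_of_connected
      c.connected_toSimpleGraph h3)

/-- If a graph is perfect and paw-free, then each connected component is
bipartite or complete multipartite. -/
theorem components_of_isPerfect_and_pawFree {V : Type*} [Fintype V]
    (G : SimpleGraph V) (hp : G.IsPerfect) (hf : G.PawFree) :
    ∀ c : G.ConnectedComponent,
      (G.induce c.supp).Colorable 2 ∨ (G.induce c.supp).IsCompleteMultipartite' :=
  components_of_isPerfect_and_pawFree_general G hp hf
end

section
/- Every complete multipartite simple graph is perfectly colorable; in particular, the proper coloring that assigns to each vertex the part containing it is a perfect coloring. -/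
/-!
Color each vertex by its part. Then distinct colors force adjacency, so for every vertex set `S`
a clique of `G[S]` meets each part at most once, while one vertex from each part met by `S` forms
a clique: `ω(G[S])` is the number of colors on `S`, whether or not `G[S]` is connected.
-/

namespace SimpleGraph

variable {V α : Type*} {G : SimpleGraph V}

theorem IsClique.injOn_coloring (C : G.Coloring α) {s : Set V} (hs : G.IsClique s) :
    Set.InjOn C s :=
  fun _ hv _ hw hvw => by_contra fun hne => C.valid (hs hv hw hne) hvw

namespace Coloring

variable [Finite V] (C : G.Coloring α)

theorem cliqueNum_le_ncard_range_s10 : G.cliqueNum ≤ (Set.range C).ncard := by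
  obtain ⟨s, hs⟩ := G.exists_isNClique_cliqueNum
  calc G.cliqueNum = (C '' s).ncard := by
        rw [(hs.isClique.injOn_coloring C).ncard_image, Set.ncard_coe_finset, hs.card_eq]
    _ ≤ (Set.range C).ncard := Set.ncard_le_ncard (Set.image_subset_range C s)

theorem ncard_range_le_cliqueNum (hC : ∀ v w, C v ≠ C w → G.Adj v w) :
    (Set.range C).ncard ≤ G.cliqueNum := by
  set r := Set.rangeSplitting C
  have hclique : G.IsClique (Set.range r) := by
    rintro _ ⟨i, rfl⟩ _ ⟨j, rfl⟩ hij
    refine hC _ _ fun hij' => hij (congrArg r (Subtype.ext ?_))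
    rwa [Set.apply_rangeSplitting C i, Set.apply_rangeSplitting C j] at hij'
  calc (Set.range C).ncard = (Set.range r).ncard :=
        (Set.ncard_range_of_injective (Set.rangeSplitting_injective C)).symm
    _ = (Set.toFinite _).toFinset.card := Set.ncard_eq_toFinset_card _
    _ ≤ G.cliqueNum := IsClique.card_le_cliqueNum (tc := by simpa using hclique)

theorem ncard_range_eq_cliqueNum (hC : ∀ v w, C v ≠ C w → G.Adj v w) :
    (Set.range C).ncard = G.cliqueNum :=
  (C.ncard_range_le_cliqueNum hC).antisymm C.cliqueNum_le_ncard_range_s10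

theorem isPerfectColoring_of_forall_ne_adj (hC : ∀ v w, C v ≠ C w → G.Adj v w) :
    G.IsPerfectColoring C := by
  intro S _
  rw [Set.image_eq_range]
  exact ncard_range_eq_cliqueNum (C.comp (Embedding.induce S).toHom) fun v w => hC v w

end Coloring

end SimpleGraph

/-- Every complete multipartite graph is perfectly colorable; in particular,
the coloring assigning to each vertex its part is a perfect coloring.  Here the
parts are the fibers of `p`, and two vertices are adjacent iff they lie in
distinct parts. -/
theorem completeMultipartite_perfectlyColorable {V ι : Type*} [Fintype V]
    (G : SimpleGraph V) (p : V → ι) (hp : ∀ v w, G.Adj v w ↔ p v ≠ p w) :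
    G.IsPerfectColoring (SimpleGraph.Coloring.mk p fun h => (hp _ _).mp h) ∧
      G.PerfectlyColorable := by
  have hC : ∀ v w, p v ≠ p w → G.Adj v w := fun v w => (hp v w).mpr
  refine ⟨SimpleGraph.Coloring.isPerfectColoring_of_forall_ne_adj _ hC, ?_⟩
  -- Re-index the parts by `Fin n`, since `PerfectlyColorable` asks for colors in `Type`.
  let q : V → Fin _ := fun v => Finite.equivFin (Set.range p) (Set.rangeFactorization p v)
  have hq : ∀ v w, q v = q w ↔ p v = p w := fun v w =>
    (Equiv.apply_eq_iff_eq _).trans Subtype.mk_eq_mk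
  refine ⟨_, SimpleGraph.Coloring.mk q fun h => mt (hq _ _).mp ((hp _ _).mp h), ?_⟩
  exact SimpleGraph.Coloring.isPerfectColoring_of_forall_ne_adj _
    fun v w h => hC v w (mt (hq v w).mpr h)
end
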